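/- In the vacuous imprecise probability tree, where Q(h|s) = max h for every situation s and every gamble h on the finite state space X, the game-theoretic upper expectation satisfies E_V(f) = sup f for every extended real variable f on the path space. -/

import Mathlib

open Filter

/-- prefix of length `n` of a path -/
def pref {X : Type*} (ω : ℕ → X) (n : ℕ) : List X := (List.range n).map ω

/-- process difference -/
def pdiff {X : Type*} (M : List X → ℝ) (s : List X) : X → ℝ := fun x => M (s ++ [x]) - M s

/-- process multiplier -/
noncomputable def pmul {X : Type*} (M : List X → ℝ) (s : List X) : X → ℝ :=
  fun x => M (s ++ [x]) / M s

/-- family of coherent upper expectations (local models of an imprecise probability tree) -/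
def Coherent {X : Type*} (Q : List X → (X → ℝ) → ℝ) : Prop :=
  ∀ s : List X,
    (∀ h : X → ℝ, Q s h ≤ ⨆ x, h x) ∧
    (∀ h g : X → ℝ, Q s (h + g) ≤ Q s h + Q s g) ∧
    (∀ (h : X → ℝ) (c : ℝ), 0 ≤ c → Q s (c • h) = c * Q s h)

/-- supermartingale for the tree with local models `Q` -/
def IsSupermart {X : Type*} (Q : List X → (X → ℝ) → ℝ) (M : List X → ℝ) : Prop :=
  ∀ s : List X, Q s (pdiff M s) ≤ 0

/-- bounded below process -/
def BddBelowProc {X : Type*} (M : List X → ℝ) : Prop := ∃ C : ℝ, ∀ s : List X, C ≤ M s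

/-- test supermartingale: nonnegative supermartingale with initial value 1 -/
def IsTestSupermart {X : Type*} (Q : List X → (X → ℝ) → ℝ) (M : List X → ℝ) : Prop :=
  IsSupermart Q M ∧ (∀ s : List X, 0 ≤ M s) ∧ M [] = 1

/-- game-theoretic upper expectation conditional on a situation `s` -/
noncomputable def EV {X : Type*} (Q : List X → (X → ℝ) → ℝ) (f : (ℕ → X) → EReal)
    (s : List X) : EReal :=
  sInf { y : EReal | ∃ M : List X → ℝ, IsSupermart Q M ∧ BddBelowProc M ∧
    (∀ ω : ℕ → X, pref ω s.length = s →
      f ω ≤ Filter.liminf (fun n => ((M (pref ω n) : ℝ) : EReal)) Filter.atTop) ∧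
    y = ((M s : ℝ) : EReal) }

/-!
A supermartingale for the vacuous model can never increase, so along every path its liminf is
at most its initial value; hence every admissible process starts at or above `sup f`.
Conversely the constant process `c` is admissible for every real `c ≥ sup f`.
-/

section

variable {X : Type*} {Q : List X → (X → ℝ) → ℝ} {M : List X → ℝ}

lemma pref_succ (ω : ℕ → X) (n : ℕ) : pref ω (n + 1) = pref ω n ++ [ω n] := by
  simp [pref, List.range_succ]

lemma isSupermart_const (hQ : ∀ s, Q s 0 ≤ 0) (c : ℝ) : IsSupermart Q fun _ => c := by
  intro s
  have hzero : pdiff (fun _ => c) s = 0 := by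
    funext x
    simp [pdiff]
  simpa [hzero] using hQ s

lemma EV_le_coe_of_forall_le (hQ : ∀ s, Q s 0 ≤ 0) {f : (ℕ → X) → EReal} {c : ℝ}
    (hf : ∀ ω, f ω ≤ c) (s : List X) : EV Q f s ≤ c :=
  sInf_le ⟨fun _ => c, isSupermart_const hQ c, ⟨c, fun _ => le_rfl⟩,
    fun ω _ => by rw [liminf_const]; exact hf ω, rfl⟩

lemma EV_le_iSup (hQ : ∀ s, Q s 0 ≤ 0) (f : (ℕ → X) → EReal) (s : List X) :
    EV Q f s ≤ ⨆ ω, f ω :=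
  EReal.le_of_forall_lt_iff_le.mp fun _c hc =>
    EV_le_coe_of_forall_le hQ (fun ω => (le_iSup f ω).trans hc.le) s

lemma IsSupermart.apply_append_le (hQ : ∀ s h x, h x ≤ Q s h) (hM : IsSupermart Q M)
    (s : List X) (x : X) : M (s ++ [x]) ≤ M s :=
  sub_nonpos.mp ((hQ s (pdiff M s) x).trans (hM s))

lemma IsSupermart.apply_pref_le_apply_nil (hQ : ∀ s h x, h x ≤ Q s h)
    (hM : IsSupermart Q M) (ω : ℕ → X) (n : ℕ) : M (pref ω n) ≤ M [] := by
  induction n with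
  | zero => simp [pref]
  | succ n ih => exact (pref_succ ω n ▸ hM.apply_append_le hQ (pref ω n) (ω n)).trans ih

lemma iSup_le_EV_nil (hQ : ∀ s h x, h x ≤ Q s h) (f : (ℕ → X) → EReal) :
    ⨆ ω, f ω ≤ EV Q f [] := by
  refine le_sInf ?_
  rintro _ ⟨M, hM, -, hf, rfl⟩
  refine iSup_le fun ω => (hf ω rfl).trans ?_
  exact liminf_le_of_frequently_le <| .of_forall fun n =>
    EReal.coe_le_coe_iff.mpr (hM.apply_pref_le_apply_nil hQ ω n)

end

theorem vacuous_EV_eq_sup_general {X : Type*} [Fintype X]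
    (Q : List X → (X → ℝ) → ℝ) (hQ : ∀ (s : List X) (h : X → ℝ), Q s h = ⨆ x, h x)
    (f : (ℕ → X) → EReal) :
    EV Q f [] = ⨆ ω : ℕ → X, f ω := by
  have hQ_zero : ∀ s, Q s 0 ≤ 0 := fun s => by
    simp only [hQ, Pi.zero_apply, Real.iSup_const_zero, le_refl]
  have hQ_ge : ∀ s h x, h x ≤ Q s h := fun s h x => by
    rw [hQ]
    exact le_ciSup (Set.finite_range h).bddAbove x
  exact le_antisymm (EV_le_iSup hQ_zero f []) (iSup_le_EV_nil hQ_ge f)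

theorem vacuous_EV_eq_sup {X : Type*} [Fintype X] [Nonempty X]
    (Q : List X → (X → ℝ) → ℝ) (hQ : ∀ (s : List X) (h : X → ℝ), Q s h = ⨆ x, h x)
    (f : (ℕ → X) → EReal) :
    EV Q f [] = ⨆ ω : ℕ → X, f ω :=
  vacuous_EV_eq_sup_general Q hQ f
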